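/- Consider a single-layer GRU with weights W_z, W_f, W_r ∈ ℝ^{n_x×n_u}, U_z, U_f, U_r ∈ ℝ^{n_x×n_x}, U_o ∈ ℝ^{n_y×n_x}, biases b_z, b_f, b_r ∈ ℝ^{n_x}, b_o ∈ ℝ^{n_y}, and its Luenberger-like observer with gains L_z, L_f ∈ ℝ^{n_x×n_y}. Fix x̌ ≥ 1. Let x, x̂ ∈ ℝ^{n_x} with ‖x‖_∞ ≤ x̌ and ‖x̂‖_∞ ≤ x̌, let u ∈ ℝ^{n_u} with ‖u‖_∞ ≤ 1, let y = U_o x + b_o and ŷ = U_o x̂ + b_o, and define the successor states x⁺ = z ∘ x + (1 − z) ∘ r and x̂⁺ = ẑ ∘ x̂ + (1 − ẑ) ∘ r̂, where z = σ(W_z u + U_z x + b_z), f = σ(W_f u + U_f x + b_f), r = tanh(W_r u + U_r (f ∘ x) + b_r), ẑ = σ(W_z u + U_z x̂ + b_z + L_z(y − ŷ)), f̂ = σ(W_f u + U_f x̂ + b_f + L_f(y − ŷ)), r̂ = tanh(W_r u + U_r (f̂ ∘ x̂) + b_r). Then ‖x⁺ − x̂⁺‖_∞ ≤ max(κ_o(σ̌_z,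 L_z, L_f), κ_o(1 − σ̌_z, L_z, L_f))·‖x − x̂‖_∞. -/

import Mathlib

open Matrix

/-- The logistic sigmoid. -/
noncomputable def sigmoid (s : ℝ) : ℝ := 1 / (1 + Real.exp (-s))

/-- ∞-norm on `Fin n → ℝ`. -/
noncomputable def normInf {n : ℕ} (v : Fin n → ℝ) : ℝ := ⨆ i, |v i|

/-- Induced ∞-norm of a matrix (maximum absolute row sum). -/
noncomputable def matNormInf {n m : ℕ} (A : Matrix (Fin n) (Fin m) ℝ) : ℝ :=
  ⨆ i, ∑ j, |A i j|

/-!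
The observer error `x⁺ - x̂⁺` splits coordinatewise as
`z (x - x̂) + (z - ẑ) (x̂ - r̂) + (1 - z) (r - r̂)`.
The output injection turns the gate pre-activation gaps into `(U_z - L_z U_o)(x - x̂)` and
`(U_f - L_f U_o)(x - x̂)`; as `σ` is `1/4`-Lipschitz and `tanh` is `1`-Lipschitz, the three terms
add up to at most `κ_o(z_j) ‖x - x̂‖_∞`. Finally `κ_o` is affine and every gate value `z_j` lies
in `[1 - σ̌_z, σ̌_z]`, so `κ_o(z_j)` is at most the larger of the two endpoint values.
-/

namespace Real

lemma abs_sigmoid_sub_le (a b : ℝ) : |sigmoid a - sigmoid b| ≤ 1 / 4 * |a - b| := by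
  have hderiv (s : ℝ) : ‖deriv sigmoid s‖ ≤ 1 / 4 := by
    have h1 : 0 ≤ 1 - sigmoid s := sub_nonneg.2 (sigmoid_le_one s)
    rw [deriv_sigmoid, norm_of_nonneg (mul_nonneg (sigmoid_nonneg s) h1)]
    nlinarith [sq_nonneg (sigmoid s - 1 / 2)]
  simpa only [norm_eq_abs] using convex_univ.norm_image_sub_le_of_norm_deriv_le
    (fun s _ => differentiableAt_sigmoid) (fun s _ => hderiv s) (Set.mem_univ b) (Set.mem_univ a)

lemma tanh_eq_two_mul_sigmoid_sub_one (x : ℝ) : tanh x = 2 * sigmoid (2 * x) - 1 := by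
  have hexp : exp (-(2 * x)) = exp (-x) ^ 2 := by rw [← exp_nat_mul]; ring_nf
  have hinv : exp x * exp (-x) = 1 := by rw [← exp_add]; simp
  rw [tanh_eq, sigmoid_def, hexp]
  field_simp
  linear_combination (2 * exp (-x)) * hinv

lemma tanh_monotone : Monotone tanh := fun a b hab => by
  rw [tanh_eq_two_mul_sigmoid_sub_one, tanh_eq_two_mul_sigmoid_sub_one]
  linarith [sigmoid_le (by linarith : 2 * a ≤ 2 * b)]

lemma abs_tanh_sub_le (a b : ℝ) : |tanh a - tanh b| ≤ |a - b| := by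
  have h := abs_sigmoid_sub_le (2 * a) (2 * b)
  rw [tanh_eq_two_mul_sigmoid_sub_one, tanh_eq_two_mul_sigmoid_sub_one,
    show 2 * sigmoid (2 * a) - 1 - (2 * sigmoid (2 * b) - 1)
      = 2 * (sigmoid (2 * a) - sigmoid (2 * b)) by ring, abs_mul, abs_two]
  rw [show 2 * a - 2 * b = 2 * (a - b) by ring, abs_mul, abs_two] at h
  linarith

lemma abs_tanh_le_of_abs_le {s c : ℝ} (h : |s| ≤ c) : |tanh s| ≤ tanh c := by
  rw [abs_le] at h ⊢
  exact ⟨by simpa only [tanh_neg] using tanh_monotone h.1, tanh_monotone h.2⟩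

end Real

lemma sigmoid_eq_real_sigmoid : sigmoid = Real.sigmoid :=
  funext fun _ => one_div _

lemma sigmoid_mem_unitInterval (s : ℝ) : sigmoid s ∈ unitInterval := by
  rw [sigmoid_eq_real_sigmoid]
  exact ⟨Real.sigmoid_nonneg s, Real.sigmoid_le_one s⟩

lemma sigmoid_mem_Icc_of_abs_le {s c : ℝ} (h : |s| ≤ c) :
    sigmoid s ∈ Set.Icc (1 - sigmoid c) (sigmoid c) := by
  rw [abs_le] at h
  rw [sigmoid_eq_real_sigmoid, ← Real.sigmoid_neg]
  exact ⟨Real.sigmoid_le h.1, Real.sigmoid_le h.2⟩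

lemma abs_sigmoid_le_one (s : ℝ) : |sigmoid s| ≤ 1 := by
  rw [abs_of_nonneg (sigmoid_mem_unitInterval s).1]
  exact (sigmoid_mem_unitInterval s).2

lemma abs_sigmoid_le_of_abs_le {s c : ℝ} (h : |s| ≤ c) : |sigmoid s| ≤ sigmoid c := by
  rw [abs_of_nonneg (sigmoid_mem_unitInterval s).1]
  exact (sigmoid_mem_Icc_of_abs_le h).2

lemma abs_sigmoid_sub_le (a b : ℝ) : |sigmoid a - sigmoid b| ≤ 1 / 4 * |a - b| := by
  rw [sigmoid_eq_real_sigmoid]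
  exact Real.abs_sigmoid_sub_le a b

lemma abs_mul_sub_mul_le_of_le {a b c d A δ ε D : ℝ} (ha : |a| ≤ A) (hbd : |b - d| ≤ δ)
    (hac : |a - c| ≤ ε) (hd : |d| ≤ D) : |a * b - c * d| ≤ A * δ + ε * D := by
  have hA : 0 ≤ A := (abs_nonneg _).trans ha
  have hε : 0 ≤ ε := (abs_nonneg _).trans hac
  calc |a * b - c * d| = |a * (b - d) + (a - c) * d| := by congr 1; ring
    _ ≤ |a| * |b - d| + |a - c| * |d| := by
        rw [← abs_mul, ← abs_mul]
        exact abs_add_le _ _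
    _ ≤ A * δ + ε * D := by gcongr

lemma abs_gate_mix_sub_le {z zh x xh r rh E δz X R δr : ℝ} (hz : z ∈ unitInterval)
    (hx : |x - xh| ≤ E) (hzz : |z - zh| ≤ δz) (hxh : |xh| ≤ X) (hrh : |rh| ≤ R)
    (hr : |r - rh| ≤ δr) :
    |z * x + (1 - z) * r - (zh * xh + (1 - zh) * rh)| ≤ z * E + δz * (X + R) + (1 - z) * δr := by
  obtain ⟨hz0, hz1⟩ := hz
  have hsplit : z * x + (1 - z) * r - (zh * xh + (1 - zh) * rh) =
      z * (x - xh) + (z - zh) * (xh - rh) + (1 - z) * (r - rh) := by ring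
  have hxr : |xh - rh| ≤ X + R := (abs_sub _ _).trans (add_le_add hxh hrh)
  rw [hsplit]
  refine (abs_add_three _ _ _).trans ?_
  rw [abs_mul, abs_mul, abs_mul, abs_of_nonneg hz0, abs_of_nonneg (sub_nonneg.2 hz1)]
  gcongr
  exact (abs_nonneg _).trans hzz

lemma le_max_of_mem_Icc_of_affine {f : ℝ → ℝ} {a b lo hi t : ℝ} (hf : ∀ s, f s = a + b * s)
    (ht : t ∈ Set.Icc lo hi) : f t ≤ max (f lo) (f hi) := by
  rw [hf, hf, hf]
  rcases le_total 0 b with hb | hb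
  · exact le_max_of_le_right (by nlinarith [ht.2])
  · exact le_max_of_le_left (by nlinarith [ht.1])

section Norms

variable {n m : ℕ}

lemma abs_le_normInf (v : Fin n → ℝ) (i : Fin n) : |v i| ≤ normInf v :=
  le_ciSup (f := fun i => |v i|) (Set.finite_range _).bddAbove i

lemma normInf_nonneg (v : Fin n → ℝ) : 0 ≤ normInf v :=
  Real.iSup_nonneg fun _ => abs_nonneg _

lemma normInf_le_mul_normInf {v w : Fin n → ℝ} {K : ℝ} (h : ∀ i, |v i| ≤ K * normInf w) :
    normInf v ≤ K * normInf w := by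
  rcases isEmpty_or_nonempty (Fin n) with hn | hn
  · simp [normInf]
  · exact ciSup_le h

lemma sum_abs_le_matNormInf (A : Matrix (Fin n) (Fin m) ℝ) (i : Fin n) :
    ∑ j, |A i j| ≤ matNormInf A :=
  le_ciSup (f := fun i => ∑ j, |A i j|) (Set.finite_range _).bddAbove i

lemma abs_mulVec_le_sum_abs_mul (A : Matrix (Fin n) (Fin m) ℝ) {v : Fin m → ℝ} {c : ℝ}
    (hv : ∀ j, |v j| ≤ c) (i : Fin n) : |(A *ᵥ v) i| ≤ (∑ j, |A i j|) * c := by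
  calc |(A *ᵥ v) i| ≤ ∑ j, |A i j * v j| :=
        Finset.abs_sum_le_sum_abs (fun j => A i j * v j) Finset.univ
    _ ≤ ∑ j, |A i j| * c := by
        gcongr with j
        rw [abs_mul]
        exact mul_le_mul_of_nonneg_left (hv j) (abs_nonneg _)
    _ = (∑ j, |A i j|) * c := (Finset.sum_mul ..).symm

lemma abs_mulVec_le_matNormInf_mul (A : Matrix (Fin n) (Fin m) ℝ) {v : Fin m → ℝ} {c : ℝ}
    (hv : ∀ j, |v j| ≤ c) (hc : 0 ≤ c) (i : Fin n) : |(A *ᵥ v) i| ≤ matNormInf A * c :=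
  (abs_mulVec_le_sum_abs_mul A hv i).trans
    (mul_le_mul_of_nonneg_right (sum_abs_le_matNormInf A i) hc)

end Norms

section GRU

variable {nx nu ny : ℕ} (W : Matrix (Fin nx) (Fin nu) ℝ) (U : Matrix (Fin nx) (Fin nx) ℝ)
  (b : Fin nx → ℝ) (u : Fin nu → ℝ)

lemma abs_preactivation_le {v : Fin nx → ℝ} {c : ℝ} (hu : ∀ k, |u k| ≤ 1)
    (hv : ∀ k, |v k| ≤ c) (j : Fin nx) :
    |(W *ᵥ u + U *ᵥ v + b) j| ≤ ⨆ i, (∑ k, |W i k| + c * ∑ k, |U i k| + |b i|) := by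
  have hrow : ∑ k, |W j k| + c * ∑ k, |U j k| + |b j| ≤
      ⨆ i, (∑ k, |W i k| + c * ∑ k, |U i k| + |b i|) :=
    le_ciSup (f := fun i => ∑ k, |W i k| + c * ∑ k, |U i k| + |b i|)
      (Set.finite_range _).bddAbove j
  have hWu := abs_mulVec_le_sum_abs_mul W hu j
  have hUv := abs_mulVec_le_sum_abs_mul U hv j
  calc |(W *ᵥ u + U *ᵥ v + b) j| ≤ |(W *ᵥ u) j| + |(U *ᵥ v) j| + |b j| :=
        abs_add_three _ _ _
    _ ≤ ∑ k, |W j k| + c * ∑ k, |U j k| + |b j| := by linarith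
    _ ≤ _ := hrow

lemma abs_sigmoid_observer_gate_sub_le (L : Matrix (Fin nx) (Fin ny) ℝ)
    (Uo : Matrix (Fin ny) (Fin nx) ℝ) (bo : Fin ny → ℝ) (x xhat : Fin nx → ℝ) (j : Fin nx) :
    |sigmoid ((W *ᵥ u + U *ᵥ x + b) j) -
        sigmoid ((W *ᵥ u + U *ᵥ xhat + b + L *ᵥ (Uo *ᵥ x + bo - (Uo *ᵥ xhat + bo))) j)| ≤
      1 / 4 * (matNormInf (U - L * Uo) * normInf (x - xhat)) := by
  have hgap : (W *ᵥ u + U *ᵥ x + b) j -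
      (W *ᵥ u + U *ᵥ xhat + b + L *ᵥ (Uo *ᵥ x + bo - (Uo *ᵥ xhat + bo))) j =
      ((U - L * Uo) *ᵥ (x - xhat)) j := by
    simp only [sub_mulVec, mulVec_sub, ← mulVec_mulVec, add_sub_add_right_eq_sub,
      Pi.add_apply, Pi.sub_apply]
    ring
  refine (abs_sigmoid_sub_le _ _).trans ?_
  rw [hgap]
  gcongr
  exact abs_mulVec_le_matNormInf_mul _ (abs_le_normInf _) (normInf_nonneg _) j

lemma abs_tanh_candidate_sub_le {v w : Fin nx → ℝ} {M : ℝ} (h : ∀ i, |v i - w i| ≤ M)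
    (j : Fin nx) :
    |Real.tanh ((W *ᵥ u + U *ᵥ v + b) j) - Real.tanh ((W *ᵥ u + U *ᵥ w + b) j)| ≤
      matNormInf U * M := by
  refine (Real.abs_tanh_sub_le _ _).trans ?_
  have hgap : (W *ᵥ u + U *ᵥ v + b) j - (W *ᵥ u + U *ᵥ w + b) j = (U *ᵥ (v - w)) j := by
    simp only [mulVec_sub, Pi.add_apply, Pi.sub_apply]
    ring
  rw [hgap]
  exact abs_mulVec_le_matNormInf_mul U h ((abs_nonneg _).trans (h j)) j

end GRU

theorem stmt_12_general {nx nu ny : ℕ}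
    (Wz Wf Wr : Matrix (Fin nx) (Fin nu) ℝ)
    (Uz Uf Ur : Matrix (Fin nx) (Fin nx) ℝ)
    (Uo : Matrix (Fin ny) (Fin nx) ℝ)
    (bz bf br : Fin nx → ℝ) (bo : Fin ny → ℝ)
    (Lz Lf : Matrix (Fin nx) (Fin ny) ℝ)
    (xcheck : ℝ)
    (x xhat : Fin nx → ℝ) (hx : normInf x ≤ xcheck) (hxhat : normInf xhat ≤ xcheck)
    (u : Fin nu → ℝ) (hu : normInf u ≤ 1) :
    let sigz : ℝ := sigmoid (⨆ i, (∑ j, |Wz i j| + xcheck * ∑ j, |Uz i j| + |bz i|))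
    let sigf : ℝ := sigmoid (⨆ i, (∑ j, |Wf i j| + xcheck * ∑ j, |Uf i j| + |bf i|))
    let phir : ℝ := Real.tanh (⨆ i, (∑ j, |Wr i j| + xcheck * ∑ j, |Ur i j| + |br i|))
    let kappao : ℝ → ℝ := fun z =>
      z + (1 - z) * ((1 / 4) * xcheck * matNormInf (Uf - Lf * Uo) + sigf) * matNormInf Ur +
        (1 / 4) * (phir + xcheck) * matNormInf (Uz - Lz * Uo)
    let y : Fin ny → ℝ := Uo.mulVec x + bo
    let yhat : Fin ny → ℝ := Uo.mulVec xhat + bo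
    let z : Fin nx → ℝ := fun j => sigmoid ((Wz.mulVec u + Uz.mulVec x + bz) j)
    let f : Fin nx → ℝ := fun j => sigmoid ((Wf.mulVec u + Uf.mulVec x + bf) j)
    let r : Fin nx → ℝ := fun j =>
      Real.tanh ((Wr.mulVec u + Ur.mulVec (fun i => f i * x i) + br) j)
    let zhat : Fin nx → ℝ := fun j =>
      sigmoid ((Wz.mulVec u + Uz.mulVec xhat + bz + Lz.mulVec (y - yhat)) j)
    let fhat : Fin nx → ℝ := fun j =>
      sigmoid ((Wf.mulVec u + Uf.mulVec xhat + bf + Lf.mulVec (y - yhat)) j)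
    let rhat : Fin nx → ℝ := fun j =>
      Real.tanh ((Wr.mulVec u + Ur.mulVec (fun i => fhat i * xhat i) + br) j)
    let xplus : Fin nx → ℝ := fun j => z j * x j + (1 - z j) * r j
    let xhatplus : Fin nx → ℝ := fun j => zhat j * xhat j + (1 - zhat j) * rhat j
    normInf (xplus - xhatplus) ≤
      max (kappao sigz) (kappao (1 - sigz)) * normInf (x - xhat) := by
  intro sigz sigf phir kappao y yhat z f r zhat fhat rhat xplus xhatplus
  set E := normInf (x - xhat)
  have hu' k : |u k| ≤ 1 := (abs_le_normInf u k).trans hu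
  have hx' k : |x k| ≤ xcheck := (abs_le_normInf x k).trans hx
  have hxhat' k : |xhat k| ≤ xcheck := (abs_le_normInf xhat k).trans hxhat
  have hE k : |x k - xhat k| ≤ E := abs_le_normInf (x - xhat) k
  have hz k := abs_sigmoid_observer_gate_sub_le Wz Uz bz u Lz Uo bo x xhat k
  have hf k := abs_sigmoid_observer_gate_sub_le Wf Uf bf u Lf Uo bo x xhat k
  have hfx k : |f k * x k - fhat k * xhat k| ≤
      sigf * E + 1 / 4 * (matNormInf (Uf - Lf * Uo) * E) * xcheck :=
    abs_mul_sub_mul_le_of_le (abs_sigmoid_le_of_abs_le (abs_preactivation_le Wf Uf bf u hu' hx' k))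
      (hE k) (hf k) (hxhat' k)
  have hfxhat k : |fhat k * xhat k| ≤ xcheck := by
    rw [abs_mul]
    exact (mul_le_mul (abs_sigmoid_le_one _) (hxhat' k) (abs_nonneg _) zero_le_one).trans_eq
      (one_mul _)
  have hr k := abs_tanh_candidate_sub_le Wr Ur br u hfx k
  have hrhat k : |rhat k| ≤ phir :=
    Real.abs_tanh_le_of_abs_le (abs_preactivation_le Wr Ur br u hu' hfxhat k)
  have hzmem k : z k ∈ Set.Icc (1 - sigz) sigz :=
    sigmoid_mem_Icc_of_abs_le (abs_preactivation_le Wz Uz bz u hu' hx' k)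
  have hκ t : kappao t = kappao 0 + (kappao 1 - kappao 0) * t := by simp only [kappao]; ring
  refine normInf_le_mul_normInf fun j => ?_
  calc |(xplus - xhatplus) j|
      ≤ _ := abs_gate_mix_sub_le (sigmoid_mem_unitInterval _) (hE j) (hz j) (hxhat' j) (hrhat j)
        (hr j)
    _ = kappao (z j) * E := by simp only [kappao]; ring
    _ ≤ max (kappao sigz) (kappao (1 - sigz)) * E := by
        refine mul_le_mul_of_nonneg_right ?_ (normInf_nonneg _)
        rw [max_comm]
        exact le_max_of_mem_Icc_of_affine hκ (hzmem j)

/-- one-step observation-error contraction for a GRU and its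
Luenberger-like observer (core of Theorem 2). -/
theorem stmt_12 {nx nu ny : ℕ}
    (Wz Wf Wr : Matrix (Fin nx) (Fin nu) ℝ)
    (Uz Uf Ur : Matrix (Fin nx) (Fin nx) ℝ)
    (Uo : Matrix (Fin ny) (Fin nx) ℝ)
    (bz bf br : Fin nx → ℝ) (bo : Fin ny → ℝ)
    (Lz Lf : Matrix (Fin nx) (Fin ny) ℝ)
    (xcheck : ℝ) (hxc : 1 ≤ xcheck)
    (x xhat : Fin nx → ℝ) (hx : normInf x ≤ xcheck) (hxhat : normInf xhat ≤ xcheck)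
    (u : Fin nu → ℝ) (hu : normInf u ≤ 1) :
    let sigz : ℝ := sigmoid (⨆ i, (∑ j, |Wz i j| + xcheck * ∑ j, |Uz i j| + |bz i|))
    let sigf : ℝ := sigmoid (⨆ i, (∑ j, |Wf i j| + xcheck * ∑ j, |Uf i j| + |bf i|))
    let phir : ℝ := Real.tanh (⨆ i, (∑ j, |Wr i j| + xcheck * ∑ j, |Ur i j| + |br i|))
    let kappao : ℝ → ℝ := fun z =>
      z + (1 - z) * ((1 / 4) * xcheck * matNormInf (Uf - Lf * Uo) + sigf) * matNormInf Ur +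
        (1 / 4) * (phir + xcheck) * matNormInf (Uz - Lz * Uo)
    let y : Fin ny → ℝ := Uo.mulVec x + bo
    let yhat : Fin ny → ℝ := Uo.mulVec xhat + bo
    let z : Fin nx → ℝ := fun j => sigmoid ((Wz.mulVec u + Uz.mulVec x + bz) j)
    let f : Fin nx → ℝ := fun j => sigmoid ((Wf.mulVec u + Uf.mulVec x + bf) j)
    let r : Fin nx → ℝ := fun j =>
      Real.tanh ((Wr.mulVec u + Ur.mulVec (fun i => f i * x i) + br) j)
    let zhat : Fin nx → ℝ := fun j =>
      sigmoid ((Wz.mulVec u + Uz.mulVec xhat + bz + Lz.mulVec (y - yhat)) j)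
    let fhat : Fin nx → ℝ := fun j =>
      sigmoid ((Wf.mulVec u + Uf.mulVec xhat + bf + Lf.mulVec (y - yhat)) j)
    let rhat : Fin nx → ℝ := fun j =>
      Real.tanh ((Wr.mulVec u + Ur.mulVec (fun i => fhat i * xhat i) + br) j)
    let xplus : Fin nx → ℝ := fun j => z j * x j + (1 - z j) * r j
    let xhatplus : Fin nx → ℝ := fun j => zhat j * xhat j + (1 - zhat j) * rhat j
    normInf (xplus - xhatplus) ≤
      max (kappao sigz) (kappao (1 - sigz)) * normInf (x - xhat) :=
  stmt_12_general Wz Wf Wr Uz Uf Ur Uo bz bf br bo Lz Lf xcheck x xhat hx hxhat u hu
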